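/- Consider the two sequences of state updates on occupancies: the exact update n_i(l+1) = n_i(l) + Y_i(l) - Y_{i+1}(l) where Y_h(l) = σ[n_{h-1}(l)]X_h(l), Y_i(l) = X_i(l)σ[n_{i-1}(l)(m_i - n_i(l) + Y_{i+1}(l))] for 1 < i < h, Y_1(l) = X_1(l)σ[m_1 - n_1(l) + Y_2(l)]; and the approximate update ñ_i(l+1) = ñ_i(l) + Ỹ_i(l)σ[m_i - ñ_i(l) + Ỹ_{i+1}(l)] - Ỹ_{i+1}(l) with Ỹ_i(l) = σ[ñ_{i-1}(l)]X_i(l) for 1 < i ≤ h and Ỹ_1(l) = X_1(l). If both systems are driven by the same channel realizations X_i(l) ∈ {0,1} and start from the same initial state n(0) = ñ(0), then for every l ≥ 0 and every 1 ≤ i ≤ h-1, n_i(l) ≥ ñ_i(l). -/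
import Mathlib


/-- `sgn x = 1` if `x > 0`, else `0`. -/
def sgn (x : ℕ) : ℕ := if 0 < x then 1 else 0

lemma sgn_eq_one {x : ℕ} (hx : 0 < x) : sgn x = 1 := if_pos hx

lemma sgn_eq_zero {x : ℕ} (hx : x = 0) : sgn x = 0 := by simp [sgn, hx]

lemma sgn_le_one (x : ℕ) : sgn x ≤ 1 := by unfold sgn; split <;> simp

lemma sgn_cases (x : ℕ) : (x = 0 ∧ sgn x = 0) ∨ (0 < x ∧ sgn x = 1) := by
  rcases Nat.eq_zero_or_pos x with hx | hx
  · exact Or.inl ⟨hx, sgn_eq_zero hx⟩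
  · exact Or.inr ⟨hx, sgn_eq_one hx⟩

lemma nat_mul_le_one {a b : ℕ} (ha : a ≤ 1) (hb : b ≤ 1) : a * b ≤ 1 := by
  calc a * b ≤ 1 * 1 := Nat.mul_le_mul ha hb
    _ = 1 := rfl

lemma sgn_mono {x y : ℕ} (hxy : x ≤ y) : sgn x ≤ sgn y := by
  rcases sgn_cases x with ⟨h0, h1⟩ | ⟨h0, h1⟩
  · simp [h1]
  · rw [h1, sgn_eq_one (lt_of_lt_of_le h0 hxy)]

/-- Temporal Boundedness Property (Theorem 1): driven by the same channel
realizations `X` and starting from the same initial state, the exact chain `n`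
pointwise dominates the approximate (drop-on-full) chain `ñ` at every
intermediate node and every time. -/
theorem stmt_14 (h : ℕ) (hh : 2 ≤ h) (m : ℕ → ℕ)
    (hm : ∀ i, 1 ≤ i → i ≤ h - 1 → 1 ≤ m i)
    (X : ℕ → ℕ → ℕ) (hX : ∀ i l, X i l ≤ 1)
    (n nt Y Yt : ℕ → ℕ → ℕ)
    -- occupancies stay within buffers
    (hrange : ∀ i l, 1 ≤ i → i ≤ h - 1 → n i l ≤ m i ∧ nt i l ≤ m i)
    -- the source (index 0) always has packets: σ[n₀] = σ[ñ₀] = 1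
    (hsrc : ∀ l, 0 < n 0 l) (hsrct : ∀ l, 0 < nt 0 l)
    -- exact chain auxiliary variables
    (hYh : ∀ l, Y h l = sgn (n (h - 1) l) * X h l)
    (hYmid : ∀ i l, 1 < i → i < h →
      Y i l = X i l * sgn (n (i - 1) l * (m i - n i l + Y (i + 1) l)))
    (hY1 : ∀ l, Y 1 l = X 1 l * sgn (m 1 - n 1 l + Y 2 l))
    -- exact chain update: n_i(l+1) = n_i(l) + Y_i(l) - Y_{i+1}(l)
    (hupd : ∀ i l, 1 ≤ i → i ≤ h - 1 → n i (l + 1) + Y (i + 1) l = n i l + Y i l)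
    -- approximate chain auxiliary variables
    (hYt : ∀ i l, 1 < i → i ≤ h → Yt i l = sgn (nt (i - 1) l) * X i l)
    (hYt1 : ∀ l, Yt 1 l = X 1 l)
    -- approximate chain update:
    -- ñ_i(l+1) = ñ_i(l) + Ỹ_i(l) σ[m_i - ñ_i(l) + Ỹ_{i+1}(l)] - Ỹ_{i+1}(l)
    (hupdt : ∀ i l, 1 ≤ i → i ≤ h - 1 →
      nt i (l + 1) + Yt (i + 1) l
        = nt i l + Yt i l * sgn (m i - nt i l + Yt (i + 1) l))
    -- same initial state
    (hinit : ∀ i, 1 ≤ i → i ≤ h - 1 → n i 0 = nt i 0) :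
    ∀ l i, 1 ≤ i → i ≤ h - 1 → nt i l ≤ n i l := by
  intro l
  induction l with
  | zero =>
    intro i h1 h2
    exact le_of_eq (hinit i h1 h2).symm
  | succ l IH =>
    intro i hi1 hi2
    have hih : i + 1 ≤ h := by omega
    -- abbreviations
    have hE1 := hupd i l hi1 hi2
    have hE2 := hupdt i l hi1 hi2
    have hF1 : nt i l ≤ n i l := IH i hi1 hi2
    have hF2 := hrange i l hi1 hi2
    have hmi : 1 ≤ m i := hm i hi1 hi2
    -- P3 : value of Yt (i+1)
    have hP3 : Yt (i + 1) l = sgn (nt i l) * X (i + 1) l := by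
      have := hYt (i + 1) l (by omega) hih
      simpa using this
    -- P5 : value of Yt i
    have hP5 : Yt i l = sgn (nt (i - 1) l) * X i l := by
      rcases Nat.eq_or_lt_of_le hi1 with h1 | h1
      · rw [← h1] at *
        rw [hYt1 l, show (1:ℕ) - 1 = 0 from rfl, sgn_eq_one (hsrct l), one_mul]
      · exact hYt i l h1 (by omega)
    -- P7 : monotonicity of the source signal
    have hP7 : sgn (nt (i - 1) l) ≤ sgn (n (i - 1) l) := by
      rcases Nat.eq_or_lt_of_le hi1 with h1 | h1
      · rw [← h1, show (1:ℕ) - 1 = 0 from rfl,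
          sgn_eq_one (hsrct l), sgn_eq_one (hsrc l)]
      · exact sgn_mono (IH (i - 1) (by omega) (by omega))
    -- P4 : facts about Y (i+1)
    have hP4 : Y (i + 1) l ≤ 1 ∧ (0 < Y (i + 1) l → X (i + 1) l = 1 ∧ 0 < n i l) := by
      rcases Nat.eq_or_lt_of_le hih with hc | hc
      · -- i + 1 = h
        have hY : Y (i + 1) l = sgn (n i l) * X (i + 1) l := by
          rw [hc]
          have := hYh l
          rwa [show h - 1 = i from by omega] at this
        rcases sgn_cases (n i l) with ⟨h0, h1⟩ | ⟨h0, h1⟩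
        · rw [hY, h1]; simp
        · rw [hY, h1, one_mul]
          refine ⟨hX _ _, fun hp => ⟨?_, h0⟩⟩
          have := hX (i + 1) l; omega
      · -- i + 1 < h
        have hY := hYmid (i + 1) l (by omega) hc
        rw [Nat.add_sub_cancel] at hY
        constructor
        · rw [hY]
          exact nat_mul_le_one (hX _ _) (sgn_le_one _)
        · intro hp
          rw [hY] at hp
          have hx : 0 < X (i + 1) l := by
            rcases Nat.eq_zero_or_pos (X (i + 1) l) with h0 | h0
            · rw [h0, Nat.zero_mul] at hp; omega
            · exact h0
          have hs : 0 < sgn (n i l * (m (i + 1) - n (i + 1) l + Y (i + 1 + 1) l)) := by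
            rcases Nat.eq_zero_or_pos (sgn (n i l * (m (i + 1) - n (i + 1) l + Y (i + 1 + 1) l))) with h0 | h0
            · rw [h0, Nat.mul_zero] at hp; omega
            · exact h0
          have hprod : 0 < n i l * (m (i + 1) - n (i + 1) l + Y (i + 1 + 1) l) := by
            rcases sgn_cases (n i l * (m (i + 1) - n (i + 1) l + Y (i + 1 + 1) l)) with ⟨h0, h1⟩ | ⟨h0, h1⟩
            · omega
            · exact h0
          have hni : 0 < n i l := by
            rcases Nat.eq_zero_or_pos (n i l) with h0 | h0
            · rw [h0, Nat.zero_mul] at hprod; omega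
            · exact h0
          have := hX (i + 1) l
          exact ⟨by omega, hni⟩
    -- P6 : value of Y i when there is room
    have hP6 : 0 < m i - n i l + Y (i + 1) l → Y i l = X i l * sgn (n (i - 1) l) := by
      intro hcond
      rcases Nat.eq_or_lt_of_le hi1 with h1 | h1
      · subst h1
        have e1 : (1:ℕ) + 1 = 2 := rfl
        rw [e1] at hcond
        rw [hY1 l, show (1:ℕ) - 1 = 0 from rfl, sgn_eq_one hcond,
          sgn_eq_one (hsrc l)]
      · rw [hYmid i l h1 (by omega)]
        rcases sgn_cases (n (i - 1) l) with ⟨h0, hs⟩ | ⟨h0, hs⟩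
        · rw [hs, h0, Nat.zero_mul, sgn_eq_zero rfl]
        · rw [hs, sgn_eq_one (Nat.mul_pos h0 hcond)]
    -- F5 : domination of service upstream
    have hF5 : 0 < m i - n i l + Y (i + 1) l → Yt i l ≤ Y i l := by
      intro hcond
      rw [hP6 hcond, hP5, Nat.mul_comm (sgn (nt (i - 1) l)) (X i l)]
      exact Nat.mul_le_mul_left _ hP7
    -- bounds on Yt i and the transmitted amount t
    have hYtile : Yt i l ≤ 1 := by
      rw [hP5]; exact nat_mul_le_one (sgn_le_one _) (hX _ _)
    have hF6 : Yt i l * sgn (m i - nt i l + Yt (i + 1) l) ≤ Yt i l := by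
      calc Yt i l * sgn (m i - nt i l + Yt (i + 1) l)
          ≤ Yt i l * 1 := Nat.mul_le_mul_left _ (sgn_le_one _)
        _ = Yt i l := Nat.mul_one _
    have hF7 : 0 < Yt i l * sgn (m i - nt i l + Yt (i + 1) l) →
        (nt i l < m i ∨ 0 < Yt (i + 1) l) := by
      intro ht
      rcases sgn_cases (m i - nt i l + Yt (i + 1) l) with ⟨h0, hs⟩ | ⟨h0, hs⟩
      · rw [hs, Nat.mul_zero] at ht; omega
      · omega
    -- decode Yt (i+1)
    have hF3a : nt i l = 0 → Yt (i + 1) l = 0 := by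
      intro h0
      rw [hP3, sgn_eq_zero h0, Nat.zero_mul]
    have hF3b : 0 < nt i l → Yt (i + 1) l = X (i + 1) l := by
      intro h0
      rw [hP3, sgn_eq_one h0, Nat.one_mul]
    have hYtp1 : Yt (i + 1) l ≤ 1 := by
      rw [hP3]; exact nat_mul_le_one (sgn_le_one _) (hX _ _)
    -- combined fact : if Y (i+1) fires, then so does Yt (i+1) unless nt i = 0
    have hF4 : 0 < Y (i + 1) l → Y (i + 1) l = 1 ∧ 0 < n i l ∧
        (0 < nt i l → Yt (i + 1) l = 1) := by
      intro hp
      obtain ⟨hx1, hni⟩ := hP4.2 hp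
      refine ⟨by omega, hni, fun h0 => ?_⟩
      rw [hF3b h0, hx1]
    have hYp1 : Y (i + 1) l ≤ 1 := hP4.1
    -- final arithmetic
    rcases Nat.eq_zero_or_pos (Y (i + 1) l) with hYp | hYp
    · -- Y (i+1) = 0
      rcases Nat.eq_zero_or_pos (Yt i l * sgn (m i - nt i l + Yt (i + 1) l)) with ht | ht
      · omega
      · rcases hF7 ht with hlt | hYtp
        · -- nt i < m i
          rcases Nat.lt_or_ge (nt i l) (n i l) with hc | hc
          · omega
          · have heq : nt i l = n i l := le_antisymm hF1 (by omega)
            have hY1' : Yt i l ≤ Y i l := hF5 (by omega)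
            omega
        · omega
    · -- Y (i+1) = 1
      obtain ⟨hY1e, hni, himpl⟩ := hF4 hYp
      have hY1' : Yt i l ≤ Y i l := hF5 (by omega)
      rcases Nat.eq_zero_or_pos (nt i l) with h0 | h0
      · have := hF3a h0
        omega
      · have := himpl h0
        omega
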